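/- Let G, H be smooth functions and L = ∂² + G∂ + H. A first-order operator Δ = A₀ + A₁∂ with A₀, A₁ smooth satisfies L∘Δ = Δᵀ∘L (as operators on C^∞(ℝ)) if and only if A₁ = 0 and A₀ is constant; that is, Δ is a constant multiple of the identity. -/

import Mathlib

/-- The second-order operator `L = ∂² + G∂ + H`. -/
noncomputable def Lop (G H : ℝ → ℝ) (f : ℝ → ℝ) : ℝ → ℝ :=
  fun x => iteratedDeriv 2 f x + G x * deriv f x + H x * f x

/-- The first-order operator `Δ = A₀ + A₁∂`. -/
noncomputable def Dop (A₀ A₁ : ℝ → ℝ) (f : ℝ → ℝ) : ℝ → ℝ :=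
  fun x => A₀ x * f x + A₁ x * deriv f x

/-- The formal adjoint `Δᵀ = (A₀ - A₁') - A₁∂` of `Δ = A₀ + A₁∂`. -/
noncomputable def DopT (A₀ A₁ : ℝ → ℝ) (f : ℝ → ℝ) : ℝ → ℝ :=
  fun x => (A₀ x - deriv A₁ x) * f x - A₁ x * deriv f x

private lemma smD {f : ℝ → ℝ} (h : ContDiff ℝ (⊤ : ℕ∞) f) :
    ContDiff ℝ (⊤ : ℕ∞) (deriv f) := (contDiff_infty_iff_deriv.mp h).2

private lemma smDiff {f : ℝ → ℝ} (h : ContDiff ℝ (⊤ : ℕ∞) f) :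
    Differentiable ℝ f := h.differentiable (by simp)

private lemma dcomb2 (a b c d : ℝ → ℝ) (ha : Differentiable ℝ a)
    (hb : Differentiable ℝ b) (hc : Differentiable ℝ c) (hd : Differentiable ℝ d) :
    deriv (fun x => a x * b x + c x * d x) =
      fun x => (deriv a x * b x + a x * deriv b x) + (deriv c x * d x + c x * deriv d x) := by
  funext x
  exact (((ha x).hasDerivAt.mul (hb x).hasDerivAt).add
    ((hc x).hasDerivAt.mul (hd x).hasDerivAt)).deriv

private lemma dcomb4 (p q r s t u v w : ℝ → ℝ) (hp : Differentiable ℝ p)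
    (hq : Differentiable ℝ q) (hr : Differentiable ℝ r) (hs : Differentiable ℝ s)
    (ht : Differentiable ℝ t) (hu : Differentiable ℝ u) (hv : Differentiable ℝ v)
    (hw : Differentiable ℝ w) (x : ℝ) :
    deriv (fun x => (p x * q x + r x * s x) + (t x * u x + v x * w x)) x =
      ((deriv p x * q x + p x * deriv q x) + (deriv r x * s x + r x * deriv s x)) +
      ((deriv t x * u x + t x * deriv u x) + (deriv v x * w x + v x * deriv w x)) := by
  exact ((((hp x).hasDerivAt.mul (hq x).hasDerivAt).add
    ((hr x).hasDerivAt.mul (hs x).hasDerivAt)).add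
    (((ht x).hasDerivAt.mul (hu x).hasDerivAt).add
    ((hv x).hasDerivAt.mul (hw x).hasDerivAt))).deriv

private lemma dcomb122 (p q r s t : ℝ → ℝ) (hp : Differentiable ℝ p)
    (hq : Differentiable ℝ q) (hr : Differentiable ℝ r) (hs : Differentiable ℝ s)
    (ht : Differentiable ℝ t) (x : ℝ) :
    deriv (fun x => p x + q x * r x + s x * t x) x =
      deriv p x + (deriv q x * r x + q x * deriv r x) +
        (deriv s x * t x + s x * deriv t x) := by
  exact (((hp x).hasDerivAt.add ((hq x).hasDerivAt.mul (hr x).hasDerivAt)).add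
    ((hs x).hasDerivAt.mul (ht x).hasDerivAt)).deriv

private lemma expandL (A₀ A₁ G H y : ℝ → ℝ)
    (hA₀ : ContDiff ℝ (⊤ : ℕ∞) A₀) (hA₁ : ContDiff ℝ (⊤ : ℕ∞) A₁)
    (hy : ContDiff ℝ (⊤ : ℕ∞) y) (x : ℝ) :
    Lop G H (Dop A₀ A₁ y) x =
      A₁ x * deriv (deriv (deriv y)) x
      + (A₀ x + 2 * deriv A₁ x + G x * A₁ x) * deriv (deriv y) x
      + (2 * deriv A₀ x + deriv (deriv A₁) x + G x * (A₀ x + deriv A₁ x)) * deriv y x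
      + (deriv (deriv A₀) x + G x * deriv A₀ x + H x * A₀ x) * y x
      + H x * A₁ x * deriv y x := by
  have h1 : deriv (Dop A₀ A₁ y) =
      fun x => (deriv A₀ x * y x + A₀ x * deriv y x) +
        (deriv A₁ x * deriv y x + A₁ x * deriv (deriv y) x) :=
    dcomb2 A₀ y A₁ (deriv y) (smDiff hA₀) (smDiff hy) (smDiff hA₁) (smDiff (smD hy))
  simp only [Lop, Dop]
  rw [iteratedDeriv_succ, iteratedDeriv_one, h1,
    dcomb4 (deriv A₀) y A₀ (deriv y) (deriv A₁) (deriv y) A₁ (deriv (deriv y))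
      (smDiff (smD hA₀)) (smDiff hy) (smDiff hA₀) (smDiff (smD hy))
      (smDiff (smD hA₁)) (smDiff (smD hy)) (smDiff hA₁) (smDiff (smD (smD hy))) x]
  ring

private lemma expandT (A₀ A₁ G H y : ℝ → ℝ)
    (hG : ContDiff ℝ (⊤ : ℕ∞) G) (hH : ContDiff ℝ (⊤ : ℕ∞) H)
    (hy : ContDiff ℝ (⊤ : ℕ∞) y) (x : ℝ) :
    DopT A₀ A₁ (Lop G H y) x =
      -(A₁ x) * deriv (deriv (deriv y)) x
      + (A₀ x - deriv A₁ x - A₁ x * G x) * deriv (deriv y) x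
      + ((A₀ x - deriv A₁ x) * G x - A₁ x * (deriv G x + H x)) * deriv y x
      + ((A₀ x - deriv A₁ x) * H x - A₁ x * deriv H x) * y x := by
  have hLy : Lop G H y = fun x => deriv (deriv y) x + G x * deriv y x + H x * y x := by
    funext z
    simp only [Lop]
    rw [iteratedDeriv_succ, iteratedDeriv_one]
  simp only [DopT, hLy]
  rw [dcomb122 (deriv (deriv y)) G (deriv y) H y (smDiff (smD (smD hy)))
    (smDiff hG) (smDiff (smD hy)) (smDiff hH) (smDiff hy) x]
  ring

/-- `L∘Δ = Δᵀ∘L` iff `A₁ = 0` and `A₀` is constant, i.e. `Δ` is a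
constant multiple of the identity. -/
theorem stmt_3 (A₀ A₁ G H : ℝ → ℝ)
    (hA₀ : ContDiff ℝ (⊤ : ℕ∞) A₀) (hA₁ : ContDiff ℝ (⊤ : ℕ∞) A₁)
    (hG : ContDiff ℝ (⊤ : ℕ∞) G) (hH : ContDiff ℝ (⊤ : ℕ∞) H) :
    (∀ y : ℝ → ℝ, ContDiff ℝ (⊤ : ℕ∞) y → ∀ x : ℝ,
        Lop G H (Dop A₀ A₁ y) x = DopT A₀ A₁ (Lop G H y) x) ↔
      ((∀ x : ℝ, A₁ x = 0) ∧ ∃ c : ℝ, ∀ x : ℝ, A₀ x = c) := by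
  have hA₀' : ContDiff ℝ (⊤ : ℕ∞) A₀ := hA₀.of_le (by simp)
  have hA₁' : ContDiff ℝ (⊤ : ℕ∞) A₁ := hA₁.of_le (by simp)
  have hG' : ContDiff ℝ (⊤ : ℕ∞) G := hG.of_le (by simp)
  have hH' : ContDiff ℝ (⊤ : ℕ∞) H := hH.of_le (by simp)
  constructor
  · intro hyp
    -- the algebraic form of the hypothesis
    have key : ∀ y : ℝ → ℝ, ContDiff ℝ (⊤ : ℕ∞) y → ∀ x : ℝ,
        A₁ x * deriv (deriv (deriv y)) x
        + (A₀ x + 2 * deriv A₁ x + G x * A₁ x) * deriv (deriv y) x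
        + (2 * deriv A₀ x + deriv (deriv A₁) x + G x * (A₀ x + deriv A₁ x)) * deriv y x
        + (deriv (deriv A₀) x + G x * deriv A₀ x + H x * A₀ x) * y x
        + H x * A₁ x * deriv y x =
        -(A₁ x) * deriv (deriv (deriv y)) x
        + (A₀ x - deriv A₁ x - A₁ x * G x) * deriv (deriv y) x
        + ((A₀ x - deriv A₁ x) * G x - A₁ x * (deriv G x + H x)) * deriv y x
        + ((A₀ x - deriv A₁ x) * H x - A₁ x * deriv H x) * y x := by
      intro y hy x
      have hy' : ContDiff ℝ (⊤ : ℕ∞) y := hy.of_le (by simp)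
      rw [← expandL A₀ A₁ G H y hA₀' hA₁' hy' x, ← expandT A₀ A₁ G H y hG' hH' hy' x]
      exact hyp y hy x
    -- Step 1 : A₁ = 0, using y = (x - t)^3
    have hb : ∀ t : ℝ, A₁ t = 0 := by
      intro t
      have hy : ContDiff ℝ (⊤ : ℕ∞) (fun x : ℝ => (x - t) ^ 3) :=
        (contDiff_id.sub contDiff_const).pow 3
      have hd1 : deriv (fun x : ℝ => (x - t) ^ 3) = fun x => 3 * (x - t) ^ 2 := by
        funext x
        have := (((hasDerivAt_id x).sub_const t).pow 3).deriv
        simpa using this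
      have hd2 : deriv (fun x : ℝ => 3 * (x - t) ^ 2) = fun x => 6 * (x - t) := by
        funext x
        have := ((((hasDerivAt_id x).sub_const t).pow 2).const_mul 3).deriv
        simp only [id_eq, Pi.pow_apply, Nat.reduceSub, pow_one, mul_one, Nat.cast_ofNat] at this
        rw [this]; ring
      have hd3 : deriv (fun x : ℝ => 6 * (x - t)) = fun _ => (6 : ℝ) := by
        funext x
        have := (((hasDerivAt_id x).sub_const t).const_mul 6).deriv
        simp only [id_eq] at this
        rw [this]; ring
      have h := key (fun x : ℝ => (x - t) ^ 3) hy t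
      rw [hd1, hd2, hd3] at h
      simp only [sub_self] at h
      norm_num at h
      linarith
    have hA₁fun : A₁ = fun _ => (0 : ℝ) := funext hb
    have hdA₁ : ∀ x : ℝ, deriv A₁ x = 0 := by
      intro x; rw [hA₁fun]; simp
    have hddA₁ : ∀ x : ℝ, deriv (deriv A₁) x = 0 := by
      intro x; rw [hA₁fun]; simp
    -- Step 2 : deriv A₀ = 0, using y = x - t
    have hda : ∀ t : ℝ, deriv A₀ t = 0 := by
      intro t
      have hy : ContDiff ℝ (⊤ : ℕ∞) (fun x : ℝ => x - t) := contDiff_id.sub contDiff_const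
      have hd1 : deriv (fun x : ℝ => x - t) = fun _ => (1 : ℝ) := by
        funext x
        exact ((hasDerivAt_id x).sub_const t).deriv
      have h := key (fun x : ℝ => x - t) hy t
      rw [hd1] at h
      simp only [deriv_const'] at h
      rw [hb t, hdA₁ t, hddA₁ t] at h
      simp only [sub_self] at h
      norm_num at h
      linarith
    refine ⟨hb, A₀ 0, fun x => ?_⟩
    exact is_const_of_deriv_eq_zero (smDiff hA₀') hda x 0
  · rintro ⟨hb, c, hc⟩ y hy x
    have hy' : ContDiff ℝ (⊤ : ℕ∞) y := hy.of_le (by simp)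
    rw [expandL A₀ A₁ G H y hA₀' hA₁' hy' x, expandT A₀ A₁ G H y hG' hH' hy' x]
    have hA₁fun : A₁ = fun _ => (0 : ℝ) := funext hb
    have hA₀fun : A₀ = fun _ => c := funext hc
    rw [hA₁fun, hA₀fun]
    simp only [deriv_const']
    ring
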